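/- Let T be a balanced tree of height 3 such that (1) every vertex of height 2 has exactly one neighbor of height 1, and (2) every vertex of height 1 has at most one neighbor of height 2. Then T is well-totally dominated. -/
import Mathlib

open SimpleGraph Set

set_option linter.unusedSectionVars false
set_option maxHeartbeats 1000000

/-- Open neighborhood of a set of vertices. -/
def nbhd {V : Type*} (G : SimpleGraph V) (D : Set V) : Set V :=
  {u | ∃ v ∈ D, G.Adj v u}

/-- Total dominating set. -/
def IsTDS {V : Type*} (G : SimpleGraph V) (D : Set V) : Prop :=
  nbhd G D = Set.univ

/-- Minimal total dominating set. -/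
def IsMinTDS {V : Type*} (G : SimpleGraph V) (D : Set V) : Prop :=
  IsTDS G D ∧ ∀ D' : Set V, D' ⊂ D → ¬ IsTDS G D'

/-- Well-totally dominated graph: all minimal TDSs have the same size. -/
def WTD {V : Type*} (G : SimpleGraph V) : Prop :=
  ∀ D₁ D₂ : Set V, IsMinTDS G D₁ → IsMinTDS G D₂ → D₁.ncard = D₂.ncard

/-- A leaf is a vertex of degree 1. -/
def IsLeaf {V : Type*} (G : SimpleGraph V) (v : V) : Prop :=
  (G.neighborSet v).ncard = 1

/-- Height of a vertex: minimum distance to a leaf. -/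
noncomputable def heightV {V : Type*} (G : SimpleGraph V) (v : V) : ℕ :=
  sInf {d | ∃ ℓ, IsLeaf G ℓ ∧ G.dist v ℓ = d}

/-- Height of a graph: maximum vertex height. -/
noncomputable def heightG {V : Type*} (G : SimpleGraph V) : ℕ :=
  sSup {d | ∃ v, heightV G v = d}

/-- Balanced: no two vertices of the same height are adjacent. -/
def IsBalanced {V : Type*} (G : SimpleGraph V) : Prop :=
  ∀ u v : V, G.Adj u v → heightV G u ≠ heightV G v

/-- Minimal with respect to open neighborhoods. -/
def IsMinNbhd {V : Type*} (G : SimpleGraph V) (D : Set V) : Prop :=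
  ∀ D' : Set V, D' ⊂ D → nbhd G D' ≠ nbhd G D

section Aux
variable {V : Type*} [Fintype V] {T : SimpleGraph V}

lemma hV_le {v ℓ : V} (hl : IsLeaf T ℓ) : heightV T v ≤ T.dist v ℓ :=
  Nat.sInf_le ⟨ℓ, hl, rfl⟩

lemma hV_exists (hne : ∃ ℓ, IsLeaf T ℓ) (v : V) :
    ∃ ℓ, IsLeaf T ℓ ∧ T.dist v ℓ = heightV T v := by
  obtain ⟨ℓ, hℓ⟩ := hne
  have : {d | ∃ ℓ, IsLeaf T ℓ ∧ T.dist v ℓ = d}.Nonempty := ⟨_, ℓ, hℓ, rfl⟩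
  exact Nat.sInf_mem this

lemma leaf_unique_nbr {ℓ u w : V} (hl : IsLeaf T ℓ) (h1 : T.Adj ℓ u) (h2 : T.Adj ℓ w) :
    u = w := by
  obtain ⟨a, ha⟩ := Set.ncard_eq_one.mp hl
  have hu : u ∈ T.neighborSet ℓ := h1
  have hw : w ∈ T.neighborSet ℓ := h2
  rw [ha] at hu hw
  simp at hu hw; rw [hu, hw]

lemma height_zero_iff (hconn : T.Connected) (hne : ∃ ℓ, IsLeaf T ℓ) (v : V) :
    heightV T v = 0 ↔ IsLeaf T v := by
  constructor
  · intro h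
    obtain ⟨ℓ, hℓ, hd⟩ := hV_exists hne v
    rw [h] at hd
    rwa [(hconn.dist_eq_zero_iff).mp hd]
  · intro h
    have := hV_le (v := v) h
    simpa [SimpleGraph.dist_self] using this

lemma height_adj_le (hconn : T.Connected) (hne : ∃ ℓ, IsLeaf T ℓ) {u v : V}
    (h : T.Adj u v) : heightV T u ≤ heightV T v + 1 := by
  obtain ⟨ℓ, hℓ, hd⟩ := hV_exists hne v
  have h1 : T.dist u v = 1 := SimpleGraph.dist_eq_one_iff_adj.mpr h
  calc heightV T u ≤ T.dist u ℓ := hV_le hℓ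
    _ ≤ T.dist u v + T.dist v ℓ := hconn.dist_triangle
    _ = heightV T v + 1 := by rw [h1, hd]; omega

lemma exists_max_height (hh : heightG T = 3) : ∃ w, heightV T w = 3 := by
  have hS : {d | ∃ v, heightV T v = d} = Set.range (heightV T) := by
    ext d; simp [Set.mem_setOf_eq, eq_comm]
  have hfin : {d | ∃ v, heightV T v = d}.Finite := by
    rw [hS]; exact Set.finite_range _
  have hne : {d | ∃ v, heightV T v = d}.Nonempty := by
    by_contra h
    rw [Set.not_nonempty_iff_eq_empty] at h
    rw [heightG, h] at hh
    simp at hh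
  have := hne.csSup_mem hfin
  rw [← heightG, hh] at this
  exact this

lemma height_le_three (hh : heightG T = 3) (v : V) : heightV T v ≤ 3 := by
  have hS : {d | ∃ v, heightV T v = d} = Set.range (heightV T) := by
    ext d; simp [Set.mem_setOf_eq, eq_comm]
  have hfin : {d | ∃ v, heightV T v = d}.Finite := by
    rw [hS]; exact Set.finite_range _
  have : heightV T v ≤ heightG T := le_csSup hfin.bddAbove ⟨v, rfl⟩
  omega

lemma exists_leaf (hh : heightG T = 3) : ∃ ℓ, IsLeaf T ℓ := by
  obtain ⟨w, hw⟩ := exists_max_height hh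
  have : heightV T w ≠ 0 := by omega
  have hne := Nat.nonempty_of_pos_sInf (Nat.pos_of_ne_zero this)
  obtain ⟨d, ℓ, hℓ, -⟩ := hne
  exact ⟨ℓ, hℓ⟩

lemma adj_height (hconn : T.Connected) (hne : ∃ ℓ, IsLeaf T ℓ)
    (hbal : IsBalanced T) {u v : V} (h : T.Adj u v) :
    heightV T u = heightV T v + 1 ∨ heightV T v = heightV T u + 1 := by
  have h1 := height_adj_le hconn hne h
  have h2 := height_adj_le hconn hne h.symm
  have h3 := hbal u v h
  omega

lemma exists_down (hconn : T.Connected) (hne : ∃ ℓ, IsLeaf T ℓ) {v : V} {k : ℕ}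
    (hv : heightV T v = k + 1) : ∃ u, T.Adj v u ∧ heightV T u = k := by
  obtain ⟨ℓ, hℓ, hd⟩ := hV_exists hne v
  rw [hv] at hd
  obtain ⟨p, hp⟩ := SimpleGraph.exists_walk_of_dist_ne_zero (by omega : T.dist v ℓ ≠ 0)
  rw [hd] at hp
  cases p with
  | nil => simp at hp
  | cons hadj q =>
    rename_i u
    simp [SimpleGraph.Walk.length_cons] at hp
    have hu_le : heightV T u ≤ k := by
      calc heightV T u ≤ T.dist u ℓ := hV_le hℓ
        _ ≤ q.length := SimpleGraph.dist_le q
        _ = k := hp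
    have hv_le := height_adj_le hconn hne hadj
    refine ⟨u, hadj, by omega⟩

lemma L1_has_L2_nbr (hconn : T.Connected) (hne : ∃ ℓ, IsLeaf T ℓ)
    (hbal : IsBalanced T) (hh : heightG T = 3)
    {u : V} (hu : heightV T u = 1) : ∃ v, T.Adj u v ∧ heightV T v = 2 := by
  classical
  by_contra hcon
  push_neg at hcon
  have hleafnbr : ∀ v, T.Adj u v → IsLeaf T v := by
    intro v hv
    have := adj_height hconn hne hbal hv
    have h2 := hcon v hv
    have : heightV T v = 0 := by omega
    exact (height_zero_iff hconn hne v).mp this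
  obtain ⟨w, hw⟩ := exists_max_height hh
  have huw : u ≠ w := by intro h; rw [h, hw] at hu; omega
  obtain ⟨p⟩ := hconn u w
  have hpath := p.toPath.2
  set q := p.toPath.1 with hq
  clear_value q
  cases q with
  | nil => exact huw rfl
  | cons hadj r =>
    rename_i x
    have hx : IsLeaf T x := hleafnbr x hadj
    cases r with
    | nil =>
      have h0 : heightV T w = 0 := (height_zero_iff hconn hne w).mpr hx
      omega
    | cons hadj2 s =>
      rename_i y
      rw [SimpleGraph.Walk.cons_isPath_iff] at hpath
      have huy : u = y := leaf_unique_nbr hx hadj.symm hadj2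
      have : u ∉ (SimpleGraph.Walk.cons hadj2 s).support := hpath.2
      rw [SimpleGraph.Walk.support_cons] at this
      exact this (by rw [huy]; exact List.mem_cons_of_mem _ s.start_mem_support)

end Aux

theorem stmt14 {V : Type*} [Fintype V] (T : SimpleGraph V) (htree : T.IsTree)
    (hbal : IsBalanced T) (hh : heightG T = 3)
    (h2 : ∀ v : V, heightV T v = 2 →
      ({u ∈ T.neighborSet v | heightV T u = 1}).ncard = 1)
    (h1 : ∀ v : V, heightV T v = 1 →
      ({u ∈ T.neighborSet v | heightV T u = 2}).ncard ≤ 1) :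
    WTD T := by
  classical
  have hconn := htree.isConnected
  have hne : ∃ ℓ, IsLeaf T ℓ := exists_leaf hh
  have hle3 := height_le_three (T := T) hh
  haveI : Nonempty V := ⟨hne.choose⟩
  -- neighbor height facts
  have nbr01 : ∀ {x u : V}, heightV T x = 0 → T.Adj x u → heightV T u = 1 := by
    intro x u hx hadj
    have := adj_height hconn hne hbal hadj
    omega
  have nbr3 : ∀ {w z : V}, heightV T w = 3 → T.Adj w z → heightV T z = 2 := by
    intro w z hw hadj
    have := adj_height hconn hne hbal hadj
    have := hle3 z
    omega
  -- uniqueness of the height-2 neighbor of a height-1 vertex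
  have uniqL2 : ∀ {u v v' : V}, heightV T u = 1 → T.Adj u v → heightV T v = 2 →
      T.Adj u v' → heightV T v' = 2 → v = v' := by
    intro u v v' hu hav hv hav' hv'
    have hcard := h1 u hu
    exact (Set.ncard_le_one_iff (Set.toFinite _)).mp hcard ⟨hav, hv⟩ ⟨hav', hv'⟩
  -- uniqueness of the height-1 neighbor of a height-2 vertex
  have uniqL1 : ∀ {v u u' : V}, heightV T v = 2 → T.Adj v u → heightV T u = 1 →
      T.Adj v u' → heightV T u' = 1 → u = u' := by
    intro v u u' hv hau hu hau' hu'
    have hcard := (h2 v hv).le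
    exact (Set.ncard_le_one_iff (Set.toFinite _)).mp hcard ⟨hau, hu⟩ ⟨hau', hu'⟩
  -- key: every minimal TDS has cardinality 2 * |L1|
  intro D₁ D₂ hD₁ hD₂
  suffices key : ∀ D : Set V, IsMinTDS T D → D.ncard = 2 * {u : V | heightV T u = 1}.ncard by
    rw [key _ hD₁, key _ hD₂]
  intro D hD
  obtain ⟨hTDS, hmin⟩ := hD
  have dom : ∀ z : V, ∃ v ∈ D, T.Adj v z := by
    intro z
    have : z ∈ nbhd T D := by rw [hTDS]; trivial
    exact this
  set L1 : Set V := {u : V | heightV T u = 1} with hL1def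
  set X : Set V := {x ∈ D | heightV T x = 0} with hXdef
  set Y : Set V := {v ∈ D | heightV T v = 2} with hYdef
  -- L1 ⊆ D
  have hL1D : L1 ⊆ D := by
    intro u hu
    obtain ⟨x, hax, hx0⟩ := exists_down hconn hne (hu : heightV T u = 1)
    have hxleaf : IsLeaf T x := (height_zero_iff hconn hne x).mp hx0
    obtain ⟨v, hvD, hva⟩ := dom x
    have : u = v := leaf_unique_nbr hxleaf hax.symm hva.symm
    rwa [this]
  -- removal helper
  have remove : ∀ w ∈ D, (∀ z : V, T.Adj w z → ∃ v ∈ D, v ≠ w ∧ T.Adj v z) → False := by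
    intro w hw hcov
    refine hmin (D \ {w}) (Set.sdiff_singleton_ssubset.mpr hw) ?_
    rw [IsTDS, Set.eq_univ_iff_forall]
    intro z
    obtain ⟨v, hvD, hva⟩ := dom z
    by_cases hvw : v = w
    · obtain ⟨v', hv'D, hv'w, hv'a⟩ := hcov z (hvw ▸ hva)
      exact ⟨v', ⟨hv'D, by simpa using hv'w⟩, hv'a⟩
    · exact ⟨v, ⟨hvD, by simpa using hvw⟩, hva⟩
  -- no height-3 vertices in D
  have hD3 : ∀ w ∈ D, heightV T w ≠ 3 := by
    intro w hw hw3
    refine remove w hw ?_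
    intro z hadj
    have hz2 : heightV T z = 2 := nbr3 hw3 hadj
    obtain ⟨u, hau, hu1⟩ := exists_down hconn hne (by omega : heightV T z = 1 + 1)
    refine ⟨u, hL1D hu1, ?_, hau.symm⟩
    intro h; rw [h, hw3] at hu1; omega
  -- partition of D
  have hpart : D = X ∪ L1 ∪ Y := by
    ext z
    constructor
    · intro hz
      have := hle3 z
      have := hD3 z hz
      interval_cases h : heightV T z
      · exact Or.inl (Or.inl ⟨hz, h⟩)
      · exact Or.inl (Or.inr h)
      · exact Or.inr ⟨hz, h⟩
      · omega
    · rintro ((⟨h, -⟩ | h) | ⟨h, -⟩)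
      · exact h
      · exact hL1D h
      · exact h
  have hdisj1 : Disjoint X L1 := by
    rw [Set.disjoint_left]; rintro a ⟨-, h0⟩ h1
    rw [hL1def, Set.mem_setOf_eq] at h1; omega
  have hdisj2 : Disjoint (X ∪ L1) Y := by
    rw [Set.disjoint_left]; rintro a (⟨-, h0⟩ | h1) ⟨-, h2⟩
    · omega
    · rw [hL1def, Set.mem_setOf_eq] at h1; omega
  have hcardD : D.ncard = X.ncard + L1.ncard + Y.ncard := by
    rw [hpart, Set.ncard_union_eq hdisj2, Set.ncard_union_eq hdisj1]
  -- choice functions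
  set f : V → V := fun x => Classical.epsilon (fun a => T.Adj x a) with hfdef
  have fspec : ∀ x : V, IsLeaf T x → T.Adj x (f x) := by
    intro x hx
    have hpos : 0 < (T.neighborSet x).ncard := by rw [hx]; omega
    obtain ⟨a, ha⟩ := Set.nonempty_of_ncard_ne_zero (s := T.neighborSet x) (by omega)
    exact Classical.epsilon_spec (p := fun a => T.Adj x a) ⟨a, ha⟩
  set m : V → V := fun v => Classical.epsilon (fun u => T.Adj v u ∧ heightV T u = 1) with hmdef
  have mspec : ∀ v : V, heightV T v = 2 → T.Adj v (m v) ∧ heightV T (m v) = 1 := by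
    intro v hv
    obtain ⟨u, hau, hu⟩ := exists_down hconn hne (by omega : heightV T v = 1 + 1)
    exact Classical.epsilon_spec (p := fun u => T.Adj v u ∧ heightV T u = 1) ⟨u, hau, hu⟩
  set P : Set V := {u ∈ L1 | ∀ v : V, T.Adj u v → heightV T v = 2 → v ∉ Y} with hPdef
  -- facts about members of X
  have hXleaf : ∀ x ∈ X, IsLeaf T x := fun x hx =>
    (height_zero_iff hconn hne x).mp hx.2
  -- f maps X onto P
  have hfX : f '' X = P := by
    apply Set.Subset.antisymm
    · rintro _ ⟨x, hxX, rfl⟩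
      have hxleaf := hXleaf x hxX
      have hadj := fspec x hxleaf
      have hfx1 : heightV T (f x) = 1 := nbr01 hxX.2 hadj
      refine ⟨hfx1, ?_⟩
      intro v hav hv2 hvY
      refine remove x hxX.1 ?_
      intro z hz
      have hzu : z = f x := leaf_unique_nbr hxleaf hz hadj
      refine ⟨v, hvY.1, ?_, by rw [hzu]; exact hav.symm⟩
      intro h; rw [h] at hv2; have := hxX.2; omega
    · intro u huP
      obtain ⟨huL1, hucond⟩ := huP
      obtain ⟨v, hvD, hva⟩ := dom u
      have hu1 : heightV T u = 1 := huL1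
      have := adj_height hconn hne hbal hva
      have hv02 : heightV T v = 0 ∨ heightV T v = 2 := by omega
      rcases hv02 with hv0 | hv2
      · have hvX : v ∈ X := ⟨hvD, hv0⟩
        have hvleaf := hXleaf v hvX
        have : f v = u := leaf_unique_nbr hvleaf (fspec v hvleaf) hva
        exact ⟨v, hvX, this⟩
      · exact absurd ⟨hvD, hv2⟩ (hucond v hva.symm hv2)
  have hfinj : Set.InjOn f X := by
    intro x1 hx1 x2 hx2 hfeq
    by_contra hne12
    have hl1 := hXleaf x1 hx1
    have hl2 := hXleaf x2 hx2
    refine remove x1 hx1.1 ?_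
    intro z hz
    have : z = f x1 := leaf_unique_nbr hl1 hz (fspec x1 hl1)
    refine ⟨x2, hx2.1, fun h => hne12 h.symm, ?_⟩
    rw [this, hfeq]; exact fspec x2 hl2
  -- m maps Y onto L1 \ P
  have hmY : m '' Y = L1 \ P := by
    apply Set.Subset.antisymm
    · rintro _ ⟨v, hvY, rfl⟩
      obtain ⟨hadj, hm1⟩ := mspec v hvY.2
      refine ⟨hm1, ?_⟩
      intro hmP
      exact hmP.2 v hadj.symm hvY.2 hvY
    · rintro u ⟨huL1, huP⟩
      rw [hPdef] at huP
      simp only [Set.mem_setOf_eq, not_and, not_forall] at huP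
      obtain ⟨v, hav, hv2, hvY⟩ := huP huL1
      rw [not_not] at hvY
      obtain ⟨hadj, hm1⟩ := mspec v hv2
      have : m v = u := uniqL1 hv2 hadj hm1 hav.symm huL1
      exact ⟨v, hvY, this⟩
  have hminj : Set.InjOn m Y := by
    intro v1 hv1 v2 hv2 hmeq
    obtain ⟨ha1, hm1⟩ := mspec v1 hv1.2
    obtain ⟨ha2, hm2⟩ := mspec v2 hv2.2
    exact uniqL2 hm1 ha1.symm hv1.2 (hmeq ▸ ha2.symm) hv2.2
  -- cardinality computations
  have hcardX : X.ncard = P.ncard := by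
    rw [← hfX, Set.ncard_image_of_injOn hfinj]
  have hcardY : Y.ncard = (L1 \ P).ncard := by
    rw [← hmY, Set.ncard_image_of_injOn hminj]
  have hPL1 : P ⊆ L1 := fun u hu => hu.1
  have hsum : (L1 \ P).ncard + P.ncard = L1.ncard :=
    Set.ncard_diff_add_ncard_of_subset hPL1
  rw [hcardD, hcardX, hcardY]
  omega
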